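/- arXiv:1805.09112 — 4 statements merged into one kernel-verified Lean document; each statement's English description precedes it below -/
import Mathlib

section
/- For fixed r ∈ ℝ and x ∈ ℝ^n \ {0}, the Möbius scalar multiple r ⊗_c x converges to the Euclidean scalar multiple r·x as c → 0⁺. -/
noncomputable section
open Real
open scoped RealInnerProductSpace
attribute [local instance] Classical.propDecidable

/-- Inverse hyperbolic tangent. -/
def artanh (x : ℝ) : ℝ := (1 / 2) * Real.log ((1 + x) / (1 - x))

/-- Inverse hyperbolic cosine. -/
def arcosh (x : ℝ) : ℝ := Real.log (x + Real.sqrt (x ^ 2 - 1))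

/-- Möbius addition on the ball `D_c^n`. -/
def mAdd {n : ℕ} (c : ℝ) (x y : EuclideanSpace ℝ (Fin n)) : EuclideanSpace ℝ (Fin n) :=
  (1 / (1 + 2 * c * ⟪x, y⟫ + c ^ 2 * ‖x‖ ^ 2 * ‖y‖ ^ 2)) •
    ((1 + 2 * c * ⟪x, y⟫ + c * ‖y‖ ^ 2) • x + (1 - c * ‖x‖ ^ 2) • y)

/-- Möbius scalar multiplication. -/
def mSmul {n : ℕ} (c r : ℝ) (x : EuclideanSpace ℝ (Fin n)) : EuclideanSpace ℝ (Fin n) :=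
  if x = 0 then 0 else
    ((1 / Real.sqrt c) * Real.tanh (r * _root_.artanh (Real.sqrt c * ‖x‖)) * ‖x‖⁻¹) • x

/-- Induced gyrovector distance. -/
def mDist {n : ℕ} (c : ℝ) (x y : EuclideanSpace ℝ (Fin n)) : ℝ :=
  (2 / Real.sqrt c) * _root_.artanh (Real.sqrt c * ‖mAdd c (-x) y‖)

/-- Conformal factor. -/
def lam {n : ℕ} (c : ℝ) (x : EuclideanSpace ℝ (Fin n)) : ℝ := 2 / (1 - c * ‖x‖ ^ 2)

/-- Exponential map at `x`. -/
def expMap {n : ℕ} (c : ℝ) (x v : EuclideanSpace ℝ (Fin n)) : EuclideanSpace ℝ (Fin n) :=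
  if v = 0 then x else
    mAdd c x ((Real.tanh (Real.sqrt c * lam c x * ‖v‖ / 2) / (Real.sqrt c * ‖v‖)) • v)

/-- Logarithmic map at `x`. -/
def logMap {n : ℕ} (c : ℝ) (x y : EuclideanSpace ℝ (Fin n)) : EuclideanSpace ℝ (Fin n) :=
  if mAdd c (-x) y = 0 then 0 else
    ((2 / (Real.sqrt c * lam c x)) * _root_.artanh (Real.sqrt c * ‖mAdd c (-x) y‖) *
      ‖mAdd c (-x) y‖⁻¹) • mAdd c (-x) y

/-- Exponential map at the origin. -/
def expZero {n : ℕ} (c : ℝ) (v : EuclideanSpace ℝ (Fin n)) : EuclideanSpace ℝ (Fin n) :=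
  if v = 0 then 0 else (Real.tanh (Real.sqrt c * ‖v‖) / (Real.sqrt c * ‖v‖)) • v

/-- Logarithmic map at the origin. -/
def logZero {n : ℕ} (c : ℝ) (y : EuclideanSpace ℝ (Fin n)) : EuclideanSpace ℝ (Fin n) :=
  if y = 0 then 0 else (_root_.artanh (Real.sqrt c * ‖y‖) / (Real.sqrt c * ‖y‖)) • y

/-- Möbius version of a linear map. -/
def mMap {n m : ℕ} (c : ℝ) (M : EuclideanSpace ℝ (Fin n) →ₗ[ℝ] EuclideanSpace ℝ (Fin m))
    (x : EuclideanSpace ℝ (Fin n)) : EuclideanSpace ℝ (Fin m) :=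
  if M x = 0 then 0 else
    ((1 / Real.sqrt c) * Real.tanh ((‖M x‖ / ‖x‖) * _root_.artanh (Real.sqrt c * ‖x‖)) *
      ‖M x‖⁻¹) • M x


/-! The map `t ↦ tanh (r * artanh (t * ‖x‖))` vanishes at `0` with derivative `r * ‖x‖` there,
since `tanh` and `artanh` both have derivative `1` at `0`. The coefficient of `x` in
`mSmul c r x` is this map at `t = √c`, divided by `√c * ‖x‖`, so it tends to `r` as `c → 0⁺`. -/

open Filter Topology

lemma artanh_zero : _root_.artanh 0 = 0 := by simp [_root_.artanh]

lemma hasDerivAt_artanh {x : ℝ} (hx : x ∈ Set.Ioo (-1) 1) :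
    HasDerivAt _root_.artanh (1 / (1 - x ^ 2)) x := by
  have h₁ : 1 + x ≠ 0 := by linarith [hx.1]
  have h₂ : 1 - x ≠ 0 := by linarith [hx.2]
  have hquot := ((hasDerivAt_id' x).const_add 1).div ((hasDerivAt_id' x).const_sub 1) h₂
  refine ((hquot.log (div_ne_zero h₁ h₂)).const_mul (1 / 2)).congr_deriv ?_
  rw [Pi.div_apply, show 1 - x ^ 2 = (1 + x) * (1 - x) by ring]
  field_simp
  ring

lemma Real.hasDerivAt_tanh (x : ℝ) : HasDerivAt Real.tanh (1 / Real.cosh x ^ 2) x := by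
  have h := (Real.hasDerivAt_sinh x).div (Real.hasDerivAt_cosh x) (Real.cosh_pos x).ne'
  rw [← sq, ← sq, Real.cosh_sq_sub_sinh_sq] at h
  exact h.congr_of_eventuallyEq (.of_forall Real.tanh_eq_sinh_div_cosh)

lemma tendsto_div_sqrt_of_hasDerivAt_zero {f : ℝ → ℝ} {f' : ℝ} (hf : HasDerivAt f f' 0)
    (hf₀ : f 0 = 0) : Tendsto (fun c => f √c / √c) (𝓝[>] 0) (𝓝 f') := by
  have hsqrt : Tendsto Real.sqrt (𝓝[>] 0) (𝓝[>] 0) :=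
    tendsto_nhdsWithin_of_tendsto_nhds_of_eventually_within _
      (by simpa using Real.continuous_sqrt.continuousWithinAt.tendsto (x := 0) (s := Set.Ioi 0))
      (eventually_nhdsWithin_of_forall fun c hc => Real.sqrt_pos.2 hc)
  refine (hf.tendsto_slope_zero_right.comp hsqrt).congr fun c => ?_
  simp [hf₀, div_eq_inv_mul]

lemma tendsto_tanh_mul_artanh_div_sqrt (r a : ℝ) :
    Tendsto (fun c => Real.tanh (r * _root_.artanh (√c * a)) / √c) (𝓝[>] 0) (𝓝 (r * a)) := by
  have hartanh : HasDerivAt (fun t => _root_.artanh (t * a)) a 0 := by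
    simpa [Function.comp_def] using
      (hasDerivAt_artanh (by simp)).comp (0 : ℝ) ((hasDerivAt_id' 0).mul_const a)
  have hf : HasDerivAt (fun t => Real.tanh (r * _root_.artanh (t * a))) (r * a) 0 := by
    simpa [Function.comp_def, _root_.artanh_zero] using
      (Real.hasDerivAt_tanh _).comp (0 : ℝ) (hartanh.const_mul r)
  exact tendsto_div_sqrt_of_hasDerivAt_zero hf (by simp [_root_.artanh_zero])

theorem mSmul_tendsto_smul {n : ℕ} (r : ℝ) (x : EuclideanSpace ℝ (Fin n)) (hx0 : x ≠ 0) :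
    Filter.Tendsto (fun c : ℝ => mSmul c r x) (nhdsWithin 0 (Set.Ioi 0)) (nhds (r • x)) := by
  have hx : ‖x‖ ≠ 0 := norm_ne_zero_iff.2 hx0
  have hcoeff := (tendsto_tanh_mul_artanh_div_sqrt r ‖x‖).mul_const ‖x‖⁻¹
  rw [mul_inv_cancel_right₀ hx] at hcoeff
  refine (hcoeff.smul_const x).congr fun c => ?_
  rw [mSmul, if_neg hx0, one_div_mul_eq_div]
end
end

section
/- The size of the Riemannian gyroline element satisfies ‖(x + dx) ⊖_c x‖ = ‖dx‖/(1 − c‖x‖²) in the first-order limit: precisely, for x ∈ D_c^n and v ∈ ℝ^n, lim_{t→0} ‖(x + tv) ⊖_c x‖/t = ‖v‖/(1 − c‖x‖²). -/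
noncomputable section
open Real
open scoped RealInnerProductSpace
attribute [local instance] Classical.propDecidable

/-!
Expanding Möbius addition, every term of the numerator of `(x + t • v) ⊖_c x` carries a factor
`t`, so the difference quotient is a rational function of `t` whose denominator at `t = 0`
is `(1 - c‖x‖²)² ≠ 0`. It is therefore continuous at `0`, with value `(1 - c‖x‖²)⁻¹ • v`.
-/

namespace Gyroline

variable {n : ℕ}

def differenceQuotient (c : ℝ) (x v : EuclideanSpace ℝ (Fin n)) (t : ℝ) :
    EuclideanSpace ℝ (Fin n) :=
  (1 / (1 + 2 * c * ⟪x + t • v, -x⟫ + c ^ 2 * ‖x + t • v‖ ^ 2 * ‖x‖ ^ 2)) •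
    ((c * t * ‖v‖ ^ 2) • x + (1 - c * ‖x‖ ^ 2 - 2 * c * t * ⟪x, v⟫) • v)

theorem mAdd_add_smul_neg (c : ℝ) (x v : EuclideanSpace ℝ (Fin n)) (t : ℝ) :
    mAdd c (x + t • v) (-x) = t • differenceQuotient c x v t := by
  have h_sq : ‖x + t • v‖ ^ 2 = ⟪x, x⟫ + 2 * t * ⟪x, v⟫ + t ^ 2 * ⟪v, v⟫ := by
    rw [← real_inner_self_eq_norm_sq, real_inner_add_add_self, real_inner_smul_right,
      real_inner_smul_left, real_inner_smul_right]
    ring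
  have h_inner : ⟪x + t • v, -x⟫ = -⟪x, x⟫ - t * ⟪x, v⟫ := by
    rw [inner_add_left, inner_neg_right, inner_neg_right, real_inner_smul_left,
      real_inner_comm v x]
    ring
  unfold mAdd differenceQuotient
  rw [norm_neg, smul_comm t]
  congr 1
  rw [h_sq, h_inner, ← real_inner_self_eq_norm_sq x, ← real_inner_self_eq_norm_sq v]
  match_scalars <;> ring

theorem differenceQuotient_zero (c : ℝ) (x v : EuclideanSpace ℝ (Fin n)) :
    differenceQuotient c x v 0 = (1 - c * ‖x‖ ^ 2)⁻¹ • v := by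
  have h_inner : ⟪x, -x⟫ = -‖x‖ ^ 2 := by
    rw [inner_neg_right, real_inner_self_eq_norm_sq]
  simp only [differenceQuotient, zero_smul, add_zero, mul_zero, zero_mul, sub_zero, h_inner]
  rw [zero_add, smul_smul,
    show 1 + 2 * c * -‖x‖ ^ 2 + c ^ 2 * ‖x‖ ^ 2 * ‖x‖ ^ 2 = (1 - c * ‖x‖ ^ 2) ^ 2 by ring,
    one_div_mul_eq_div, sq (1 - c * ‖x‖ ^ 2), div_self_mul_self']

theorem continuousAt_differenceQuotient {c : ℝ} {x : EuclideanSpace ℝ (Fin n)}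
    (hx : c * ‖x‖ ^ 2 < 1) (v : EuclideanSpace ℝ (Fin n)) :
    ContinuousAt (differenceQuotient c x v) 0 := by
  have h_denom : 1 + 2 * c * ⟪x + (0 : ℝ) • v, -x⟫ + c ^ 2 * ‖x + (0 : ℝ) • v‖ ^ 2 * ‖x‖ ^ 2
      ≠ 0 := by
    rw [zero_smul, add_zero, inner_neg_right, real_inner_self_eq_norm_sq]
    nlinarith
  unfold differenceQuotient
  fun_prop (disch := exact h_denom)

end Gyroline

open Gyroline in
theorem gyroline_element_general {n : ℕ} (c : ℝ)
    (x : EuclideanSpace ℝ (Fin n)) (hx : c * ‖x‖ ^ 2 < 1) (v : EuclideanSpace ℝ (Fin n)) :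
    Filter.Tendsto (fun t : ℝ => ‖mAdd c (x + t • v) (-x)‖ / t)
      (nhdsWithin 0 (Set.Ioi 0)) (nhds (‖v‖ / (1 - c * ‖x‖ ^ 2))) := by
  have h_limit : ‖differenceQuotient c x v 0‖ = ‖v‖ / (1 - c * ‖x‖ ^ 2) := by
    rw [differenceQuotient_zero, norm_smul, norm_inv, Real.norm_of_nonneg (by linarith),
      inv_mul_eq_div]
  rw [← h_limit]
  refine ((continuousAt_differenceQuotient hx v).norm.mono_left nhdsWithin_le_nhds).congr' ?_
  filter_upwards [self_mem_nhdsWithin] with t (ht : 0 < t)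
  rw [mAdd_add_smul_neg, norm_smul, Real.norm_of_nonneg ht.le, mul_div_cancel_left₀ _ ht.ne']

theorem gyroline_element {n : ℕ} (c : ℝ) (hc : 0 < c)
    (x : EuclideanSpace ℝ (Fin n)) (hx : c * ‖x‖ ^ 2 < 1) (v : EuclideanSpace ℝ (Fin n)) :
    Filter.Tendsto (fun t : ℝ => ‖mAdd c (x + t • v) (-x)‖ / t)
      (nhdsWithin 0 (Set.Ioi 0)) (nhds (‖v‖ / (1 - c * ‖x‖ ^ 2))) :=
  gyroline_element_general c x hx v
end
end

section
/- For c > 0, x ∈ D_c^n, and nonzero v ∈ ℝ^n, the exponential map exp_x^c(v) = x ⊕_c (tanh(√c λ_x^c ‖v‖ / 2) · v/(√c‖v‖)) and the logarithmic map log_x^c(y) = (2/(√c λ_x^c)) tanh⁻¹(√c‖(−x) ⊕_c y‖) · ((−x) ⊕_c y)/‖(−x) ⊕_c y‖ are mutually inverse: log_x^c(exp_x^c(v)) = v for all nonzero v ∈ ℝ^n. -/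
noncomputable section
open Real
open scoped RealInnerProductSpace
attribute [local instance] Classical.propDecidable

/-! `exp_x^c v = x ⊕_c w` with `w = tanh (√c λ_x^c ‖v‖ / 2) / (√c ‖v‖) • v`, a point of the ball.
Möbius addition satisfies the left cancellation law `(-x) ⊕_c (x ⊕_c w) = w` as soon as its
denominators do not vanish, which is the case inside the ball, so `log_x^c` is evaluated at `w`
itself; there `√c ‖w‖ = tanh (√c λ_x^c ‖v‖ / 2)` and `artanh ∘ tanh = id` restores the length
of `v`. -/
theorem artanh_tanh (s : ℝ) : _root_.artanh (tanh s) = s := by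
  rw [_root_.artanh, ← Real.artanh_eq_half_log ⟨(neg_one_lt_tanh s).le, (tanh_lt_one s).le⟩,
    Real.artanh_tanh]

theorem Real.tanh_pos {s : ℝ} (hs : 0 < s) : 0 < tanh s := by
  rw [tanh_eq_sinh_div_cosh]
  exact div_pos (sinh_pos_iff.2 hs) (cosh_pos s)

theorem mAdd_denom_pos {n : ℕ} {c : ℝ} (hc : 0 ≤ c) {x y : EuclideanSpace ℝ (Fin n)}
    (hx : c * ‖x‖ ^ 2 < 1) (hy : c * ‖y‖ ^ 2 < 1) :
    0 < 1 + 2 * c * ⟪x, y⟫ + c ^ 2 * ‖x‖ ^ 2 * ‖y‖ ^ 2 := by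
  have hxy : c * (‖x‖ * ‖y‖) < 1 := by
    have : (c * (‖x‖ * ‖y‖)) ^ 2 < 1 := by
      calc (c * (‖x‖ * ‖y‖)) ^ 2 = (c * ‖x‖ ^ 2) * (c * ‖y‖ ^ 2) := by ring
        _ < 1 := mul_lt_one_of_nonneg_of_lt_one_left (by positivity) hx hy.le
    exact (pow_lt_one_iff_of_nonneg (by positivity) two_ne_zero).1 this
  have hinner : -(‖x‖ * ‖y‖) ≤ ⟪x, y⟫ := (abs_le.1 (abs_real_inner_le_norm x y)).1
  calc 0 < (1 - c * (‖x‖ * ‖y‖)) ^ 2 := pow_pos (sub_pos.2 hxy) 2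
    _ ≤ _ := by nlinarith

theorem mAdd_neg_cancel_left {n : ℕ} {c : ℝ} {x y : EuclideanSpace ℝ (Fin n)}
    (hD : 1 + 2 * c * ⟪x, y⟫ + c ^ 2 * ‖x‖ ^ 2 * ‖y‖ ^ 2 ≠ 0) (hx : c * ‖x‖ ^ 2 ≠ 1) :
    mAdd c (-x) (mAdd c x y) = y := by
  set D := 1 + 2 * c * ⟪x, y⟫ + c ^ 2 * ‖x‖ ^ 2 * ‖y‖ ^ 2
  set r := 1 + 2 * c * ⟪x, y⟫ + c * ‖y‖ ^ 2
  set s := 1 - c * ‖x‖ ^ 2 with hs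
  have hs0 : s ≠ 0 := sub_ne_zero.2 (Ne.symm hx)
  have hz : mAdd c x y = D⁻¹ • (r • x + s • y) := by rw [mAdd, one_div]
  have hinner : ⟪x, mAdd c x y⟫ = (r * ‖x‖ ^ 2 + s * ⟪x, y⟫) / D := by
    rw [hz, real_inner_smul_right, inner_add_right, real_inner_smul_right, real_inner_smul_right,
      real_inner_self_eq_norm_sq]
    field_simp
  have hnorm :
      ‖mAdd c x y‖ ^ 2 = (r ^ 2 * ‖x‖ ^ 2 + 2 * r * s * ⟪x, y⟫ + s ^ 2 * ‖y‖ ^ 2) / D ^ 2 := by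
    rw [hz, norm_smul, mul_pow, norm_add_sq_real, norm_smul, norm_smul, real_inner_smul_left,
      real_inner_smul_right, Real.norm_eq_abs, Real.norm_eq_abs, Real.norm_eq_abs]
    simp only [mul_pow, sq_abs]
    field_simp
  have hD' :
      1 + 2 * c * ⟪-x, mAdd c x y⟫ + c ^ 2 * ‖-x‖ ^ 2 * ‖mAdd c x y‖ ^ 2 = s ^ 2 / D := by
    rw [inner_neg_left, norm_neg, hinner, hnorm]
    field_simp
    ring
  have hr' : 1 + 2 * c * ⟪-x, mAdd c x y⟫ + c * ‖mAdd c x y‖ ^ 2 = s * r / D := by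
    rw [inner_neg_left, hinner, hnorm]
    field_simp
    ring
  rw [mAdd, hD', hr', norm_neg, ← hs, hz]
  match_scalars
  · field_simp
    ring
  · field_simp

theorem logMap_expMap {n : ℕ} (c : ℝ) (hc : 0 < c)
    (x : EuclideanSpace ℝ (Fin n)) (hx : c * ‖x‖ ^ 2 < 1)
    (v : EuclideanSpace ℝ (Fin n)) (hv : v ≠ 0) :
    logMap c x (expMap c x v) = v := by
  have hsc : 0 < √c := sqrt_pos.2 hc
  have hv' : 0 < ‖v‖ := norm_pos_iff.2 hv
  have hlam : 0 < lam c x := div_pos two_pos (sub_pos.2 hx)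
  set s := √c * lam c x * ‖v‖ / 2 with hs
  have hts : 0 < tanh s := Real.tanh_pos (by positivity)
  set w := (tanh s / (√c * ‖v‖)) • v
  have hw : √c * ‖w‖ = tanh s := by
    rw [norm_smul, Real.norm_of_nonneg (by positivity)]
    field_simp
  have hw_ball : c * ‖w‖ ^ 2 < 1 := by
    rw [← sq_sqrt hc.le, ← mul_pow, hw]
    exact tanh_sq_lt_one s
  have hw0 : w ≠ 0 := smul_ne_zero (by positivity) hv
  rw [expMap, if_neg hv, logMap,
    mAdd_neg_cancel_left (mAdd_denom_pos hc.le hx hw_ball).ne' hx.ne, if_neg hw0, hw,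
    _root_.artanh_tanh, smul_smul]
  convert one_smul ℝ v
  field_simp
  rw [← hw, hs]
  ring
end
end

section
/- For c > 0, x ∈ D_c^n, p ∈ D_c^n, a ∈ ℝ^n \ {0}, the distance from x to the Poincaré hyperplane H = {w ∈ D_c^n : ⟨(−p) ⊕_c w, a⟩ = 0} equals (1/√c) sinh⁻¹( 2√c |⟨(−p) ⊕_c x, a⟩| / ((1 − c‖(−p) ⊕_c x‖²) ‖a‖) ), where distance is d_c(x,w) = (2/√c) tanh⁻¹(√c‖(−x) ⊕_c w‖). -/
noncomputable section
open Real
open scoped RealInnerProductSpace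
attribute [local instance] Classical.propDecidable

/-!
Möbius left translation by `-p` is an isometry of `d_c` that carries the Poincaré hyperplane onto
the Euclidean hyperplane `a^⊥` through the origin and `x` to `y = (-p) ⊕_c x`, so it suffices to
treat `p = 0`. With `m = (-u) ⊕_c y` one has `sinh (√c d_c(u, y)) = 2√c ‖m‖ / (1 - c‖m‖²)`, and
for `u ⊥ a` the ratio `⟪m, a⟫ / (1 - c‖m‖²)` equals `⟪y, a⟫ / (1 - c‖y‖²)`. Cauchy–Schwarz
`|⟪m, a⟫| ≤ ‖m‖ ‖a‖` then gives the lower bound, with equality when `m` is parallel to `a`; such a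
`u` is a multiple `μ z` of the projection `z` of `y` onto `a^⊥`, where `μ ∈ [0, 1]` is a root of a
quadratic found by the intermediate value theorem.
-/

theorem sinh_two_mul_artanh {r : ℝ} (h₁ : -1 < r) (h₂ : r < 1) :
    Real.sinh (2 * _root_.artanh r) = 2 * r / (1 - r ^ 2) := by
  have hpos : 0 < (1 + r) / (1 - r) := div_pos (by linarith) (by linarith)
  have h₃ : 1 - r ≠ 0 := by linarith
  have h₄ : 1 + r ≠ 0 := by linarith
  have h₅ : 1 - r ^ 2 ≠ 0 := by nlinarith
  rw [_root_.artanh, ← mul_assoc, mul_one_div_cancel two_ne_zero, one_mul, Real.sinh_log hpos]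
  field_simp
  ring

theorem exists_mem_Icc_quadratic_eq_zero {q Y : ℝ} (hqY : q ≤ Y) :
    ∃ μ ∈ Set.Icc (0 : ℝ) 1, q * μ ^ 2 - (1 + Y) * μ + 1 = 0 := by
  have hcont : ContinuousOn (fun μ : ℝ => q * μ ^ 2 - (1 + Y) * μ + 1) (Set.Icc 0 1) := by
    fun_prop
  exact intermediate_value_Icc' zero_le_one hcont ⟨by norm_num; linarith, by norm_num⟩

section Mobius

variable {n : ℕ} {c : ℝ}
local notation "E" => EuclideanSpace ℝ (Fin n)

def mAddDenom (c : ℝ) (x y : E) : ℝ := 1 + 2 * c * ⟪x, y⟫ + c ^ 2 * ‖x‖ ^ 2 * ‖y‖ ^ 2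

theorem mAdd_eq (c : ℝ) (x y : E) :
    mAdd c x y = (mAddDenom c x y)⁻¹ •
      ((1 + 2 * c * ⟪x, y⟫ + c * ‖y‖ ^ 2) • x + (1 - c * ‖x‖ ^ 2) • y) := by
  rw [mAdd, mAddDenom, one_div]

theorem mAdd_zero (c : ℝ) (x : E) : mAdd c x 0 = x := by
  simp [mAdd]

theorem mAddDenom_eq (c : ℝ) (x y : E) :
    mAddDenom c x y = (1 - c * ‖x‖ ^ 2) * (1 - c * ‖y‖ ^ 2) + c * ‖x + y‖ ^ 2 := by
  rw [mAddDenom, norm_add_sq_real]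
  ring

theorem mAddDenom_pos (hc : 0 < c) {x y : E} (hx : c * ‖x‖ ^ 2 < 1) (hy : c * ‖y‖ ^ 2 < 1) :
    0 < mAddDenom c x y := by
  rw [mAddDenom_eq]
  exact add_pos_of_pos_of_nonneg (mul_pos (sub_pos.2 hx) (sub_pos.2 hy)) (by positivity)

theorem norm_sq_mAdd (c : ℝ) (x y : E) :
    ‖mAdd c x y‖ ^ 2 = ‖x + y‖ ^ 2 / mAddDenom c x y := by
  have hnum : ‖(1 + 2 * c * ⟪x, y⟫ + c * ‖y‖ ^ 2) • x + (1 - c * ‖x‖ ^ 2) • y‖ ^ 2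
      = mAddDenom c x y * ‖x + y‖ ^ 2 := by
    simp only [← real_inner_self_eq_norm_sq, inner_add_left, inner_add_right,
      real_inner_smul_left, real_inner_smul_right, mAddDenom]
    rw [real_inner_comm y x]
    ring
  rw [mAdd_eq, norm_smul, mul_pow, hnum, norm_inv, Real.norm_eq_abs, inv_pow, sq_abs]
  rcases eq_or_ne (mAddDenom c x y) 0 with hD | hD
  · simp [hD]
  · field_simp

theorem one_sub_mul_norm_sq_mAdd {x y : E} (hD : mAddDenom c x y ≠ 0) :
    1 - c * ‖mAdd c x y‖ ^ 2 = (1 - c * ‖x‖ ^ 2) * (1 - c * ‖y‖ ^ 2) / mAddDenom c x y := by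
  rw [norm_sq_mAdd, eq_div_iff hD, sub_mul, mul_assoc, div_mul_cancel₀ _ hD, mAddDenom_eq]
  ring

theorem mAdd_mem_ball (hc : 0 < c) {x y : E} (hx : c * ‖x‖ ^ 2 < 1) (hy : c * ‖y‖ ^ 2 < 1) :
    c * ‖mAdd c x y‖ ^ 2 < 1 := by
  have hD := mAddDenom_pos hc hx hy
  have h := one_sub_mul_norm_sq_mAdd hD.ne'
  have : 0 < (1 - c * ‖x‖ ^ 2) * (1 - c * ‖y‖ ^ 2) / mAddDenom c x y :=
    div_pos (mul_pos (sub_pos.2 hx) (sub_pos.2 hy)) hD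
  linarith

theorem norm_sq_neg_mAdd (c : ℝ) (x y : E) :
    ‖mAdd c (-x) y‖ ^ 2 =
      ‖y - x‖ ^ 2 / ((1 - c * ‖x‖ ^ 2) * (1 - c * ‖y‖ ^ 2) + c * ‖y - x‖ ^ 2) := by
  rw [norm_sq_mAdd, mAddDenom_eq, norm_neg, neg_add_eq_sub]

theorem norm_neg_mAdd_comm (c : ℝ) (x y : E) : ‖mAdd c (-x) y‖ = ‖mAdd c (-y) x‖ := by
  rw [← sq_eq_sq₀ (norm_nonneg _) (norm_nonneg _), norm_sq_neg_mAdd, norm_sq_neg_mAdd,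
    norm_sub_rev, mul_comm (1 - c * ‖y‖ ^ 2)]

theorem mDist_comm (c : ℝ) (x y : E) : mDist c x y = mDist c y x := by
  rw [mDist, mDist, norm_neg_mAdd_comm]

theorem norm_sq_mAdd_sub_mAdd {p u v : E} (hu : mAddDenom c p u ≠ 0) (hv : mAddDenom c p v ≠ 0) :
    ‖mAdd c p u - mAdd c p v‖ ^ 2 =
      (1 - c * ‖p‖ ^ 2) ^ 2 * ‖u - v‖ ^ 2 / (mAddDenom c p u * mAddDenom c p v) := by
  rw [norm_sub_sq_real, norm_sq_mAdd, norm_sq_mAdd, mAdd_eq, mAdd_eq]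
  simp only [inner_add_left, inner_add_right, real_inner_smul_left, real_inner_smul_right]
  rw [real_inner_self_eq_norm_sq, real_inner_comm p u, norm_add_sq_real,
    norm_add_sq_real, norm_sub_sq_real]
  field_simp
  unfold mAddDenom
  ring

theorem neg_mAdd_cancel_left (hc : 0 < c) {p w : E} (hp : c * ‖p‖ ^ 2 < 1)
    (hw : c * ‖w‖ ^ 2 < 1) : mAdd c (-p) (mAdd c p w) = w := by
  set v := mAdd c p w with hv
  have hD := (mAddDenom_pos hc hp hw).ne'
  have hAp : 1 - c * ‖p‖ ^ 2 ≠ 0 := (sub_pos.2 hp).ne'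
  -- `p = p ⊕ 0`, so this is an instance of `norm_sq_mAdd_sub_mAdd`
  have hvp : ‖v - p‖ ^ 2 = (1 - c * ‖p‖ ^ 2) ^ 2 * ‖w‖ ^ 2 / mAddDenom c p w := by
    have h0 : mAddDenom c p 0 = 1 := by simp [mAddDenom]
    have h := norm_sq_mAdd_sub_mAdd (v := 0) hD (by rw [h0]; exact one_ne_zero)
    rwa [mAdd_zero, h0, mul_one, sub_zero] at h
  have hAv : 1 - c * ‖v‖ ^ 2 = (1 - c * ‖p‖ ^ 2) * (1 - c * ‖w‖ ^ 2) / mAddDenom c p w :=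
    one_sub_mul_norm_sq_mAdd hD
  have hD' : mAddDenom c (-p) v = (1 - c * ‖p‖ ^ 2) ^ 2 / mAddDenom c p w := by
    rw [mAddDenom_eq, norm_neg, hAv, neg_add_eq_sub, hvp]
    field_simp
    ring
  have hα : 1 + 2 * c * ⟪-p, v⟫ + c * ‖v‖ ^ 2 =
      (1 - c * ‖p‖ ^ 2) * (1 + 2 * c * ⟪p, w⟫ + c * ‖w‖ ^ 2) / mAddDenom c p w := by
    have h : 1 + 2 * c * ⟪-p, v⟫ + c * ‖v‖ ^ 2 = 1 - c * ‖p‖ ^ 2 + c * ‖v - p‖ ^ 2 := by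
      rw [norm_sub_sq_real, inner_neg_left, real_inner_comm]
      ring
    rw [h, hvp]
    field_simp
    unfold mAddDenom
    ring
  rw [mAdd_eq, hD', hα, norm_neg, hv, mAdd_eq]
  match_scalars
  · field_simp
    ring
  · field_simp

theorem norm_neg_mAdd_mAdd_mAdd (hc : 0 < c) {p u v : E} (hp : c * ‖p‖ ^ 2 < 1)
    (hu : c * ‖u‖ ^ 2 < 1) (hv : c * ‖v‖ ^ 2 < 1) :
    ‖mAdd c (-(mAdd c p u)) (mAdd c p v)‖ = ‖mAdd c (-u) v‖ := by
  have hDu := mAddDenom_pos hc hp hu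
  have hDv := mAddDenom_pos hc hp hv
  have hAp : 1 - c * ‖p‖ ^ 2 ≠ 0 := (sub_pos.2 hp).ne'
  have hQ : 0 < (1 - c * ‖u‖ ^ 2) * (1 - c * ‖v‖ ^ 2) + c * ‖v - u‖ ^ 2 :=
    add_pos_of_pos_of_nonneg (mul_pos (sub_pos.2 hu) (sub_pos.2 hv)) (by positivity)
  rw [← sq_eq_sq₀ (norm_nonneg _) (norm_nonneg _), norm_sq_neg_mAdd, norm_sq_neg_mAdd,
    one_sub_mul_norm_sq_mAdd hDu.ne', one_sub_mul_norm_sq_mAdd hDv.ne',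
    norm_sq_mAdd_sub_mAdd hDv.ne' hDu.ne']
  field_simp

theorem mDist_mAdd_mAdd (hc : 0 < c) {p u v : E} (hp : c * ‖p‖ ^ 2 < 1)
    (hu : c * ‖u‖ ^ 2 < 1) (hv : c * ‖v‖ ^ 2 < 1) :
    mDist c (mAdd c p u) (mAdd c p v) = mDist c u v := by
  rw [mDist, mDist, norm_neg_mAdd_mAdd_mAdd hc hp hu hv]

theorem sinh_sqrt_mul_mDist (hc : 0 < c) {x y : E} (hx : c * ‖x‖ ^ 2 < 1)
    (hy : c * ‖y‖ ^ 2 < 1) :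
    Real.sinh (√c * mDist c x y) =
      2 * √c / (1 - c * ‖mAdd c (-x) y‖ ^ 2) * ‖mAdd c (-x) y‖ := by
  have hm := mAdd_mem_ball hc (x := -x) (by rwa [norm_neg]) hy
  have hsq : (√c * ‖mAdd c (-x) y‖) ^ 2 = c * ‖mAdd c (-x) y‖ ^ 2 := by
    rw [mul_pow, Real.sq_sqrt hc.le]
  have h₀ : 0 ≤ √c * ‖mAdd c (-x) y‖ := by positivity
  have h₁ : √c * ‖mAdd c (-x) y‖ < 1 := by nlinarith
  rw [mDist, ← mul_assoc, mul_div_cancel₀ _ (Real.sqrt_pos.2 hc).ne',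
    sinh_two_mul_artanh (by linarith) h₁, hsq]
  ring

theorem inner_mAdd_div_of_inner_eq_zero (hc : 0 < c) {u y a : E} (hu : c * ‖u‖ ^ 2 < 1)
    (hy : c * ‖y‖ ^ 2 < 1) (hua : ⟪u, a⟫ = 0) :
    ⟪mAdd c u y, a⟫ / (1 - c * ‖mAdd c u y‖ ^ 2) = ⟪y, a⟫ / (1 - c * ‖y‖ ^ 2) := by
  have hD := (mAddDenom_pos hc hu hy).ne'
  have hAu := (sub_pos.2 hu).ne'
  have hAy := (sub_pos.2 hy).ne'
  rw [one_sub_mul_norm_sq_mAdd hD, mAdd_eq, real_inner_smul_left, inner_add_left,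
    real_inner_smul_left, real_inner_smul_left, hua, mul_zero, zero_add]
  field_simp

theorem two_mul_sqrt_mul_abs_inner_div_eq (hc : 0 < c) {u y a : E} (hu : c * ‖u‖ ^ 2 < 1)
    (hy : c * ‖y‖ ^ 2 < 1) (hua : ⟪u, a⟫ = 0) :
    2 * √c * |⟪y, a⟫| / ((1 - c * ‖y‖ ^ 2) * ‖a‖) =
      2 * √c / (1 - c * ‖mAdd c (-u) y‖ ^ 2) * (|⟪mAdd c (-u) y, a⟫| / ‖a‖) := by
  have hu' : c * ‖-u‖ ^ 2 < 1 := by rwa [norm_neg]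
  have hAy := sub_pos.2 hy
  have hAm := sub_pos.2 (mAdd_mem_ball hc hu' hy)
  have h := inner_mAdd_div_of_inner_eq_zero hc hu' hy (by rw [inner_neg_left, hua, neg_zero])
  calc 2 * √c * |⟪y, a⟫| / ((1 - c * ‖y‖ ^ 2) * ‖a‖)
      = 2 * √c * |⟪y, a⟫ / (1 - c * ‖y‖ ^ 2)| / ‖a‖ := by
        rw [abs_div, abs_of_pos hAy, mul_div_assoc', div_div]
    _ = 2 * √c / (1 - c * ‖mAdd c (-u) y‖ ^ 2) * (|⟪mAdd c (-u) y, a⟫| / ‖a‖) := by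
        rw [← h, abs_div, abs_of_pos hAm]
        ring

theorem le_sinh_sqrt_mul_mDist (hc : 0 < c) {u y a : E} (hu : c * ‖u‖ ^ 2 < 1)
    (hy : c * ‖y‖ ^ 2 < 1) (hua : ⟪u, a⟫ = 0) :
    2 * √c * |⟪y, a⟫| / ((1 - c * ‖y‖ ^ 2) * ‖a‖) ≤ Real.sinh (√c * mDist c u y) := by
  have hAm := sub_pos.2 (mAdd_mem_ball hc (x := -u) (by rwa [norm_neg]) hy)
  rw [two_mul_sqrt_mul_abs_inner_div_eq hc hu hy hua, sinh_sqrt_mul_mDist hc hu hy]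
  gcongr
  exact div_le_of_le_mul₀ (norm_nonneg _) (norm_nonneg _) (abs_real_inner_le_norm _ _)

theorem sinh_sqrt_mul_mDist_of_mAdd_eq_smul (hc : 0 < c) {u y a : E} (hu : c * ‖u‖ ^ 2 < 1)
    (hy : c * ‖y‖ ^ 2 < 1) (hua : ⟪u, a⟫ = 0) (ha : a ≠ 0) {k : ℝ}
    (hk : mAdd c (-u) y = k • a) :
    Real.sinh (√c * mDist c u y) = 2 * √c * |⟪y, a⟫| / ((1 - c * ‖y‖ ^ 2) * ‖a‖) := by
  have ha' : ‖a‖ ≠ 0 := norm_ne_zero_iff.2 ha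
  rw [two_mul_sqrt_mul_abs_inner_div_eq hc hu hy hua, sinh_sqrt_mul_mDist hc hu hy]
  congr 1
  rw [hk, real_inner_smul_left, real_inner_self_eq_norm_sq, norm_smul, Real.norm_eq_abs, abs_mul,
    abs_of_nonneg (sq_nonneg ‖a‖)]
  field_simp

theorem exists_mAdd_neg_smul_eq_smul {z a y : E} {t μ : ℝ} (hza : ⟪z, a⟫ = 0)
    (hy : y = z + t • a) (hμ : c * ‖z‖ ^ 2 * μ ^ 2 - (1 + c * ‖y‖ ^ 2) * μ + 1 = 0) :
    ∃ k : ℝ, mAdd c (-(μ • z)) y = k • a := by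
  have hzy : ⟪-(μ • z), y⟫ = -(μ * ‖z‖ ^ 2) := by
    simp only [hy, inner_neg_left, inner_add_right, real_inner_smul_left, real_inner_smul_right,
      hza, real_inner_self_eq_norm_sq]
    ring
  have hnorm : ‖-(μ • z)‖ ^ 2 = μ ^ 2 * ‖z‖ ^ 2 := by
    rw [norm_neg, norm_smul, mul_pow, Real.norm_eq_abs, sq_abs]
  refine ⟨(mAddDenom c (-(μ • z)) y)⁻¹ * (1 - c * (μ ^ 2 * ‖z‖ ^ 2)) * t, ?_⟩
  rw [mAdd_eq, hzy, hnorm]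
  subst hy
  match_scalars
  · linear_combination (mAddDenom c (-(μ • z)) (z + t • a))⁻¹ * hμ
  · ring

theorem exists_mAdd_neg_eq_smul (hc : 0 ≤ c) {y : E} (hy : c * ‖y‖ ^ 2 < 1) (a : E) :
    ∃ u : E, c * ‖u‖ ^ 2 < 1 ∧ ⟪u, a⟫ = 0 ∧ ∃ k : ℝ, mAdd c (-u) y = k • a := by
  set t := ⟪y, a⟫ / ‖a‖ ^ 2 with ht
  set z := y - t • a
  have hza : ⟪z, a⟫ = 0 := by
    rcases eq_or_ne a 0 with rfl | ha
    · simp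
    rw [inner_sub_left, real_inner_smul_left, real_inner_self_eq_norm_sq, ht,
      div_mul_cancel₀ _ (pow_ne_zero 2 (norm_ne_zero_iff.2 ha)), sub_self]
  have hyz : y = z + t • a := (sub_add_cancel y _).symm
  have hzy : ‖z‖ ^ 2 ≤ ‖y‖ ^ 2 := by
    rw [hyz, norm_add_sq_real, real_inner_smul_right, hza, mul_zero, mul_zero, add_zero]
    exact le_add_of_nonneg_right (sq_nonneg _)
  obtain ⟨μ, ⟨hμ₀, hμ₁⟩, hμ⟩ := exists_mem_Icc_quadratic_eq_zero (mul_le_mul_of_nonneg_left hzy hc)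
  refine ⟨μ • z, ?_, by rw [real_inner_smul_left, hza, mul_zero],
    exists_mAdd_neg_smul_eq_smul hza hyz hμ⟩
  calc c * ‖μ • z‖ ^ 2 = μ ^ 2 * (c * ‖z‖ ^ 2) := by
        rw [norm_smul, mul_pow, Real.norm_eq_abs, sq_abs]
        ring
    _ ≤ 1 * (c * ‖y‖ ^ 2) :=
        mul_le_mul (pow_le_one₀ hμ₀ hμ₁) (mul_le_mul_of_nonneg_left hzy hc) (by positivity)
          zero_le_one
    _ < 1 := by linarith

theorem isLeast_image_sinh_sqrt_mul_mDist (hc : 0 < c) {y a : E} (hy : c * ‖y‖ ^ 2 < 1)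
    (ha : a ≠ 0) :
    IsLeast ((fun u => Real.sinh (√c * mDist c u y)) '' {u | c * ‖u‖ ^ 2 < 1 ∧ ⟪u, a⟫ = 0})
      (2 * √c * |⟪y, a⟫| / ((1 - c * ‖y‖ ^ 2) * ‖a‖)) := by
  refine ⟨?_, ?_⟩
  · obtain ⟨u, hu, hua, k, hk⟩ := exists_mAdd_neg_eq_smul hc.le hy a
    exact ⟨u, ⟨hu, hua⟩, sinh_sqrt_mul_mDist_of_mAdd_eq_smul hc hu hy hua ha hk⟩
  · rintro _ ⟨u, ⟨hu, hua⟩, rfl⟩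
    exact le_sinh_sqrt_mul_mDist hc hu hy hua

theorem isLeast_image_mDist (hc : 0 < c) {y a : E} (hy : c * ‖y‖ ^ 2 < 1) (ha : a ≠ 0) :
    IsLeast (mDist c y '' {u | c * ‖u‖ ^ 2 < 1 ∧ ⟪u, a⟫ = 0})
      (1 / √c * Real.arsinh (2 * √c * |⟪y, a⟫| / ((1 - c * ‖y‖ ^ 2) * ‖a‖))) := by
  have hmono : Monotone fun s : ℝ => 1 / √c * Real.arsinh s := fun s t hst =>
    mul_le_mul_of_nonneg_left (Real.arsinh_le_arsinh.2 hst) (by positivity)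
  have hd : (fun u => 1 / √c * Real.arsinh (Real.sinh (√c * mDist c u y))) = mDist c y := by
    funext u
    rw [Real.arsinh_sinh, mDist_comm]
    field_simp
  simpa only [Set.image_image, hd] using
    hmono.map_isLeast (isLeast_image_sinh_sqrt_mul_mDist hc hy ha)

theorem image_mDist_setOf_mAdd_neg (hc : 0 < c) {p x : E} (hp : c * ‖p‖ ^ 2 < 1)
    (hx : c * ‖x‖ ^ 2 < 1) (P : E → Prop) :
    mDist c x '' {w | c * ‖w‖ ^ 2 < 1 ∧ P (mAdd c (-p) w)} =
      mDist c (mAdd c (-p) x) '' {u | c * ‖u‖ ^ 2 < 1 ∧ P u} := by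
  have hp' : c * ‖-p‖ ^ 2 < 1 := by rwa [norm_neg]
  ext t
  constructor
  · rintro ⟨w, ⟨hw, hPw⟩, rfl⟩
    exact ⟨mAdd c (-p) w, ⟨mAdd_mem_ball hc hp' hw, hPw⟩, mDist_mAdd_mAdd hc hp' hx hw⟩
  · rintro ⟨u, ⟨hu, hPu⟩, rfl⟩
    have hpu := mAdd_mem_ball hc hp hu
    refine ⟨mAdd c p u, ⟨hpu, by rwa [neg_mAdd_cancel_left hc hp hu]⟩, ?_⟩
    rw [← mDist_mAdd_mAdd hc hp' hx hpu, neg_mAdd_cancel_left hc hp hu]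

end Mobius

theorem dist_to_poincare_hyperplane {n : ℕ} (c : ℝ) (hc : 0 < c)
    (x : EuclideanSpace ℝ (Fin n)) (hx : c * ‖x‖ ^ 2 < 1)
    (p : EuclideanSpace ℝ (Fin n)) (hp : c * ‖p‖ ^ 2 < 1)
    (a : EuclideanSpace ℝ (Fin n)) (ha : a ≠ 0) :
    sInf (mDist c x ''
        {w : EuclideanSpace ℝ (Fin n) | c * ‖w‖ ^ 2 < 1 ∧ ⟪mAdd c (-p) w, a⟫ = 0}) =
      (1 / Real.sqrt c) * Real.arsinh
        (2 * Real.sqrt c * |⟪mAdd c (-p) x, a⟫| /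
          ((1 - c * ‖mAdd c (-p) x‖ ^ 2) * ‖a‖)) := by
  have hy : c * ‖mAdd c (-p) x‖ ^ 2 < 1 := mAdd_mem_ball hc (by rwa [norm_neg]) hx
  rw [image_mDist_setOf_mAdd_neg hc hp hx fun u => ⟪u, a⟫ = 0]
  exact (isLeast_image_mDist hc hy ha).csInf_eq
end
end
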